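/- arXiv:1308.0228 — 2 statements merged into one kernel-verified Lean document; each statement's English description precedes it below -/
import Mathlib

section
/- Let A_q(z) = exp(−i·g·z·log q)·P(exp(i·z·log q)). Then every complex root x of P satisfies |x| = 1 if and only if for every real ω > 0 the entire function z ↦ A_q(z + iω) belongs to the Hermite–Biehler class. -/
open Complex

/-- The self-reciprocal polynomial `P(x) = Σ_{k=0}^{g-1} c_k (x^{2g-k} + x^k) + c_g x^g`,
viewed as a function on `ℂ`. -/
noncomputable def Pfun (g : ℕ) (c : ℕ → ℝ) (x : ℂ) : ℂ :=
  ∑ k ∈ Finset.range g, (c k : ℂ) * (x ^ (2*g - k) + x ^ k) + (c g : ℂ) * x ^ g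

/-- `A_q(z) = exp(-i g z log q) · P(exp(i z log q))`. -/
noncomputable def Aq (g : ℕ) (c : ℕ → ℝ) (q : ℝ) (z : ℂ) : ℂ :=
  Complex.exp (-(Complex.I * (g : ℂ) * z * (Real.log q : ℂ))) *
    Pfun g c (Complex.exp (Complex.I * z * (Real.log q : ℂ)))

/-- An entire function `F` belongs to the Hermite–Biehler class if `|F♯(z)| < |F(z)|`
for every `z` in the open upper half-plane, where `F♯(z) = conj (F (conj z))`, and `F`
has no zeros on the real axis. -/
def HermiteBiehler (F : ℂ → ℂ) : Prop :=
  Differentiable ℂ F ∧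
  (∀ z : ℂ, 0 < z.im →
    ‖(starRingEnd ℂ) (F ((starRingEnd ℂ) z))‖ < ‖F z‖) ∧
  ∀ x : ℝ, F (x : ℂ) ≠ 0

/-!
Put `L = log q`, `E = exp (i z L)` and `t = q ^ ω > 1`. Since
`|A_q(u)| = q^(g Im u) |P(exp (i u L))|` and `A_q♯ = A_q` (self-reciprocity of `P`), the
Hermite–Biehler inequality for `A_q(· + iω)` at `z` reads `|P(E t)| < t^(2g) |P(E / t)|`,
where `|E| < 1`.

If every root of `P` lies on the unit circle, the quotient `P(u t) / (t^(2g) P(u / t))` is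
holomorphic near the closed unit disc, has modulus `1` on the unit circle (self-reciprocity
again), and vanishes at `α / t` for a root `α`; the maximum principle gives the strict inequality.
Conversely, roots of `P` come in pairs `x, 1/x` and `0` is not a root, so a root off the circle
yields a root `y` with `0 < |y| < 1`, hence a zero of `A_q` in the upper half-plane, which a
Hermite–Biehler function cannot have.
-/

open ComplexConjugate

theorem norm_lt_one_of_frontier_norm_le_of_eq_zero {f : ℂ → ℂ} {U : Set ℂ}
    (hb : Bornology.IsBounded U) (ho : IsOpen U) (hc : IsPreconnected U) (hf : DiffContOnCl ℂ f U)
    (hbd : ∀ u ∈ frontier U, ‖f u‖ ≤ 1) {z₀ : ℂ} (hz₀ : z₀ ∈ U) (h0 : f z₀ = 0) {w : ℂ}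
    (hw : w ∈ U) : ‖f w‖ < 1 := by
  have hle : ∀ y ∈ U, ‖f y‖ ≤ 1 := fun y hy =>
    Complex.norm_le_of_forall_mem_frontier_norm_le hb hf hbd (subset_closure hy)
  refine (hle w hw).lt_of_ne fun h => ?_
  have hmax : IsMaxOn (norm ∘ f) U w := fun y hy => by simpa [h] using hle y hy
  have hw0 : f w = 0 :=
    (Complex.eqOn_of_isPreconnected_of_isMaxOn_norm hc ho hf.differentiableOn hw hmax
      hz₀).symm.trans h0
  norm_num [hw0] at h

theorem not_hermiteBiehler_of_eq_zero {F : ℂ → ℂ} {z : ℂ} (hz : 0 < z.im) (hF : F z = 0) :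
    ¬ HermiteBiehler F := fun hHB =>
  (norm_nonneg _).not_gt (by simpa [hF] using hHB.2.1 z hz)

section Pfun

variable {g : ℕ} {c : ℕ → ℝ}

theorem Pfun_conj (x : ℂ) : Pfun g c (conj x) = conj (Pfun g c x) := by
  simp [Pfun]

theorem Pfun_zero (hg : 0 < g) : Pfun g c 0 = c 0 := by
  rw [Pfun, Finset.sum_eq_single_of_mem 0 (Finset.mem_range.2 hg)]
  · simp [hg.ne']
  · intro k hk hk0
    rw [zero_pow hk0, zero_pow (by have := Finset.mem_range.1 hk; omega), add_zero, mul_zero]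

theorem Pfun_inv_mul_pow {x : ℂ} (hx : x ≠ 0) :
    Pfun g c x⁻¹ * x ^ (2 * g) = Pfun g c x := by
  have inv_pow_mul : ∀ n ≤ 2 * g, x⁻¹ ^ n * x ^ (2 * g) = x ^ (2 * g - n) := fun n hn => by
    rw [pow_sub₀ x hx hn, inv_pow, mul_comm]
  rw [Pfun, Pfun, add_mul, Finset.sum_mul]
  congr 1
  · refine Finset.sum_congr rfl fun k hk => ?_
    have hk := Finset.mem_range.1 hk
    rw [mul_assoc, add_mul, inv_pow_mul _ (by omega), inv_pow_mul _ (by omega),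
      Nat.sub_sub_self (by omega), add_comm]
  · rw [mul_assoc, inv_pow_mul g (by omega), show 2 * g - g = g by omega]

@[fun_prop]
theorem differentiable_Pfun : Differentiable ℂ (Pfun g c) := by
  unfold Pfun
  fun_prop

theorem exists_Pfun_eq_zero (hg : 0 < g) (hc0 : c 0 ≠ 0) : ∃ x, Pfun g c x = 0 := by
  open Polynomial in
  let p : ℂ[X] :=
    ∑ k ∈ Finset.range g, C (c k : ℂ) * (X ^ (2 * g - k) + X ^ k) + C (c g : ℂ) * X ^ g
  have eval_p (x : ℂ) : p.eval x = Pfun g c x := by simp [p, Pfun, eval_finsetSum]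
  suffices p.degree ≠ 0 from (IsAlgClosed.exists_root p this).imp fun x hx => (eval_p x) ▸ hx
  intro hdeg
  -- a constant self-reciprocal `P` would satisfy `P = 2 ^ (2g) P` with `P = P(0) = c₀ ≠ 0`
  have hconst (x : ℂ) : Pfun g c x = c 0 := by
    rw [← eval_p, eq_C_of_degree_eq_zero hdeg, eval_C, ← eval_C (a := p.coeff 0) (x := 0),
      ← eq_C_of_degree_eq_zero hdeg, eval_p, Pfun_zero hg]
  have h2 := Pfun_inv_mul_pow (g := g) (c := c) (two_ne_zero (α := ℂ))
  rw [hconst, hconst, mul_eq_left₀ (by exact_mod_cast hc0)] at h2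
  have : (1 : ℝ) < 2 ^ (2 * g) := one_lt_pow₀ one_lt_two (by omega)
  exact this.ne' (by exact_mod_cast h2)

theorem norm_pow_mul_norm_Pfun_conj_inv {x : ℂ} (hx : x ≠ 0) :
    ‖x‖ ^ (2 * g) * ‖Pfun g c (conj x⁻¹)‖ = ‖Pfun g c x‖ := by
  rw [Pfun_conj, Complex.norm_conj, ← norm_pow, ← norm_mul, mul_comm, Pfun_inv_mul_pow hx]

theorem exists_Pfun_eq_zero_norm_lt_one (hg : 0 < g) (hc0 : c 0 ≠ 0) {x : ℂ}
    (hx : Pfun g c x = 0) (hx1 : ‖x‖ ≠ 1) : ∃ y ≠ 0, Pfun g c y = 0 ∧ ‖y‖ < 1 := by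
  have hx0 : x ≠ 0 := by
    rintro rfl
    exact hc0 (by exact_mod_cast (Pfun_zero hg).symm.trans hx)
  rcases hx1.lt_or_gt with hlt | hgt
  · exact ⟨x, hx0, hx, hlt⟩
  · refine ⟨x⁻¹, inv_ne_zero hx0, ?_, by simpa using inv_lt_one_of_one_lt₀ hgt⟩
    have := Pfun_inv_mul_pow (g := g) (c := c) hx0
    rw [hx, mul_eq_zero] at this
    exact this.resolve_right (pow_ne_zero _ hx0)

theorem norm_Pfun_div_of_norm_eq_one {u : ℂ} (hu : ‖u‖ = 1) {t : ℝ} (ht : 0 < t) :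
    t ^ (2 * g) * ‖Pfun g c (u / t)‖ = ‖Pfun g c (u * t)‖ := by
  have hut : u * t ≠ 0 :=
    mul_ne_zero (norm_ne_zero_iff.1 (by simp [hu])) (by exact_mod_cast ht.ne')
  have hconj : conj (u * t)⁻¹ = u / t := by
    rw [mul_inv, map_mul, map_inv₀, map_inv₀, Complex.conj_ofReal, ← Complex.inv_eq_conj hu,
      inv_inv, div_eq_mul_inv]
  rw [← norm_pow_mul_norm_Pfun_conj_inv hut, hconj, norm_mul, hu, one_mul,
    Complex.norm_of_nonneg ht.le]

theorem norm_Pfun_mul_lt (hg : 0 < g) (hc0 : c 0 ≠ 0)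
    (hroots : ∀ x, Pfun g c x = 0 → ‖x‖ = 1) {t : ℝ} (ht : 1 < t) {w : ℂ} (hw : ‖w‖ < 1) :
    ‖Pfun g c (w * t)‖ < t ^ (2 * g) * ‖Pfun g c (w / t)‖ := by
  have ht0 : 0 < t := one_pos.trans ht
  have hden {u : ℂ} (hu : ‖u‖ < t) : Pfun g c (u / t) ≠ 0 := fun h => by
    have := hroots _ h
    rw [norm_div, Complex.norm_of_nonneg ht0.le, div_eq_one_iff_eq ht0.ne'] at this
    exact hu.ne this
  let f : ℂ → ℂ := fun u => Pfun g c (u * t) / ((t : ℂ) ^ (2 * g) * Pfun g c (u / t))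
  have norm_f (u : ℂ) :
      ‖f u‖ = ‖Pfun g c (u * t)‖ / (t ^ (2 * g) * ‖Pfun g c (u / t)‖) := by
    simp [f, abs_of_pos ht0]
  have hf : DifferentiableOn ℂ f (Metric.ball 0 t) := by
    refine DifferentiableOn.div (by fun_prop) (by fun_prop) fun u hu => ?_
    exact mul_ne_zero (by exact_mod_cast (pow_pos ht0 _).ne') (hden (by simpa using hu))
  have hbd : ∀ u ∈ frontier (Metric.ball (0 : ℂ) 1), ‖f u‖ ≤ 1 := fun u hu => by
    rw [frontier_ball 0 one_ne_zero, mem_sphere_zero_iff_norm] at hu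
    rw [norm_f, ← norm_Pfun_div_of_norm_eq_one hu ht0, div_self]
    exact mul_ne_zero (pow_pos ht0 _).ne' (norm_ne_zero_iff.2 (hden (by linarith)))
  obtain ⟨α, hα⟩ := exists_Pfun_eq_zero hg hc0
  have hαt : α / t ∈ Metric.ball (0 : ℂ) 1 := by
    simpa [hroots α hα, abs_of_pos ht0] using inv_lt_one_of_one_lt₀ ht
  have hclosure : closure (Metric.ball (0 : ℂ) 1) ⊆ Metric.ball 0 t :=
    closure_ball (0 : ℂ) one_ne_zero ▸ Metric.closedBall_subset_ball ht
  have hfw := norm_lt_one_of_frontier_norm_le_of_eq_zero Metric.isBounded_ball Metric.isOpen_ball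
    (convex_ball 0 1).isPreconnected (hf.mono hclosure).diffContOnCl
    hbd hαt (by simp [f, div_mul_cancel₀ _ (Complex.ofReal_ne_zero.2 ht0.ne'), hα])
    (by simpa using hw)
  rwa [norm_f, div_lt_one (mul_pos (pow_pos ht0 _) (norm_pos_iff.2 (hden (by linarith))))]
    at hfw

end Pfun

section Aq

variable {g : ℕ} {c : ℕ → ℝ} {q : ℝ}

@[fun_prop]
theorem differentiable_Aq : Differentiable ℂ (Aq g c q) := by
  unfold Aq
  fun_prop

theorem norm_exp_I_mul_mul_ofReal (z : ℂ) (L : ℝ) :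
    ‖exp (I * z * L)‖ = Real.exp (-(z.im * L)) := by
  simp [Complex.norm_exp, Complex.mul_re]

theorem Aq_conj (u : ℂ) : conj (Aq g c q (conj u)) = Aq g c q u := by
  set L : ℂ := (Real.log q : ℂ)
  set E := exp (I * u * L) with hE
  have hconjE : conj (exp (I * conj u * L)) = E⁻¹ := by
    simp [E, L, ← Complex.exp_conj, ← Complex.exp_neg]
  have hconj_fac :
      conj (exp (-(I * g * conj u * L))) = exp (-(I * g * u * L)) * E ^ (2 * g) := by
    rw [← Complex.exp_conj, hE, ← Complex.exp_nat_mul, ← Complex.exp_add]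
    congr 1
    simp only [map_neg, map_mul, conj_I, map_natCast, conj_ofReal, Complex.conj_conj, L]
    push_cast
    ring
  rw [Aq, Aq, map_mul, ← Pfun_conj, hconjE, hconj_fac, mul_assoc,
    mul_comm (E ^ _), Pfun_inv_mul_pow (Complex.exp_ne_zero _)]

theorem norm_Aq (u : ℂ) :
    ‖Aq g c q u‖ = Real.exp (g * Real.log q * u.im) * ‖Pfun g c (exp (I * u * Real.log q))‖ := by
  rw [Aq, norm_mul, Complex.norm_exp]
  congr 2
  simp [Complex.mul_re]
  ring

theorem exp_I_mul_add_I_mul_ofReal (z : ℂ) (s L : ℝ) :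
    exp (I * (z + I * s) * L) = exp (I * z * L) / (Real.exp (s * L) : ℂ) := by
  rw [Complex.ofReal_exp, ← Complex.exp_sub]
  congr 1
  push_cast
  linear_combination (s * L : ℂ) * Complex.I_mul_I

theorem Aq_ne_zero_of_im_ne_zero (hq : 1 < q) (hroots : ∀ x, Pfun g c x = 0 → ‖x‖ = 1)
    {z : ℂ} (hz : z.im ≠ 0) : Aq g c q z ≠ 0 := by
  refine mul_ne_zero (Complex.exp_ne_zero _) fun h => hz ?_
  have := hroots _ h
  rw [norm_exp_I_mul_mul_ofReal, Real.exp_eq_one_iff, neg_eq_zero, mul_eq_zero] at this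
  exact this.resolve_right (Real.log_pos hq).ne'

theorem exists_Aq_eq_zero (hq : 1 < q) {y : ℂ} (hy0 : y ≠ 0) (hy : Pfun g c y = 0) :
    ∃ ζ, Aq g c q ζ = 0 ∧ ζ.im = -Real.log ‖y‖ / Real.log q := by
  have hL : (Real.log q : ℂ) ≠ 0 := Complex.ofReal_ne_zero.2 (Real.log_pos hq).ne'
  refine ⟨-I * Complex.log y / Real.log q, ?_, ?_⟩
  · have : I * (-I * Complex.log y / Real.log q) * Real.log q = Complex.log y := by
      field_simp
      simp
    rw [Aq, this, Complex.exp_log hy0, hy, mul_zero]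
  · simp [Complex.div_ofReal_im, Complex.log_re, neg_div]

theorem hermiteBiehler_Aq_comp_add_I_mul (hg : 0 < g) (hc0 : c 0 ≠ 0) (hq : 1 < q)
    (hroots : ∀ x, Pfun g c x = 0 → ‖x‖ = 1) {ω : ℝ} (hω : 0 < ω) :
    HermiteBiehler fun z => Aq g c q (z + I * ω) := by
  have hL : 0 < Real.log q := Real.log_pos hq
  refine ⟨by fun_prop, fun z hz => ?_,
    fun x => Aq_ne_zero_of_im_ne_zero hq hroots (by simp [hω.ne'])⟩
  have hsharp : conj z + I * ω = conj (z + I * (-ω : ℝ)) := by simp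
  have him (s : ℝ) : (z + I * s).im = z.im + s := by simp
  set E := exp (I * z * Real.log q)
  have hE : ‖E‖ < 1 := by
    rw [norm_exp_I_mul_mul_ofReal, Real.exp_lt_one_iff]
    nlinarith
  set t := Real.exp (ω * Real.log q)
  have ht : 1 < t := Real.one_lt_exp_iff.2 (by positivity)
  have hdiv : E / (Real.exp (-ω * Real.log q) : ℂ) = E * t := by
    rw [neg_mul, Real.exp_neg, ofReal_inv, div_inv_eq_mul]
  have hexp : Real.exp (g * Real.log q * (z.im + -ω)) * t ^ (2 * g) =
      Real.exp (g * Real.log q * (z.im + ω)) := by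
    rw [← Real.exp_nat_mul, ← Real.exp_add]
    push_cast
    ring_nf
  dsimp only
  rw [hsharp, Aq_conj, norm_Aq, norm_Aq, exp_I_mul_add_I_mul_ofReal, exp_I_mul_add_I_mul_ofReal,
    him, him, hdiv, ← hexp, mul_assoc _ (t ^ _)]
  exact mul_lt_mul_of_pos_left (norm_Pfun_mul_lt hg hc0 hroots ht hE) (Real.exp_pos _)

end Aq

theorem stmt11 (g : ℕ) (hg : 1 ≤ g) (q : ℝ) (hq : 1 < q) (c : ℕ → ℝ) (hc0 : c 0 ≠ 0) :
    (∀ x : ℂ, Pfun g c x = 0 → ‖x‖ = 1) ↔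
    (∀ ω : ℝ, 0 < ω →
      HermiteBiehler (fun z => Aq g c q (z + Complex.I * (ω : ℂ)))) := by
  refine ⟨fun hroots _ hω => hermiteBiehler_Aq_comp_add_I_mul hg hc0 hq hroots hω,
    fun hHB => ?_⟩
  by_contra! ⟨x, hx, hx1⟩
  obtain ⟨y, hy0, hy, hy1⟩ := exists_Pfun_eq_zero_norm_lt_one hg hc0 hx hx1
  obtain ⟨ζ, hζ, hζim⟩ := exists_Aq_eq_zero hq hy0 hy
  have hζpos : 0 < ζ.im := by
    rw [hζim]
    exact div_pos (neg_pos.2 (Real.log_neg (norm_pos_iff.2 hy0) hy1)) (Real.log_pos hq)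
  refine not_hermiteBiehler_of_eq_zero (z := ζ - I * (ζ.im / 2 : ℝ)) ?_ ?_
    (hHB _ (half_pos hζpos))
  · simp only [sub_im, mul_im, I_re, I_im, ofReal_re, ofReal_im]
    linarith
  · simpa using hζ
end

section
/- For every 1 ≤ n ≤ 2g and each sign ε ∈ {+1, −1}: det(E₀⁺ + ε·E₀⁻·Jₙ^{(8g)}) = C(−g)^{4g}·det(e₀⁺ + ε·e₀⁻·Jₙ^{(4g)}) = C(−g)^{6g−1}·det(E⁺ + ε·E⁻·Jₙ^{(2g+1)}). -/
/-! `E₀⁺`, `e₀⁺` and `E⁺` are lower triangular with constant diagonal `C(-g)`, because `C`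
vanishes outside `[-g, g]`, while `Jₙ` is supported in the top-left `n × n` corner. Hence for
`n ≤ k` the columns of index `≥ k` of `A + ε B Jₙ` are those of `A`: the matrix is block lower
triangular, and its determinant is `C(-g)^(N-k)` times that of its top-left `k × k` block, which
has the same shape again. Cutting `8g` down to `4g`, and `4g` down to `2g + 1`, gives both
identities. -/

open Matrix

/-- The `(2g+1) × (2g+1)` matrix `E⁺` with (1-based) `(i,j)` entry `C (i - j - g)`. -/
noncomputable def Ep (g : ℕ) (C : ℤ → ℝ) : Matrix (Fin (2*g+1)) (Fin (2*g+1)) ℝ :=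
  fun i j => C (((i : ℕ) : ℤ) - ((j : ℕ) : ℤ) - (g : ℤ))

/-- The `(2g+1) × (2g+1)` matrix `E⁻` with (1-based) `(i,j)` entry `C (g - i + j)`. -/
noncomputable def Em (g : ℕ) (C : ℤ → ℝ) : Matrix (Fin (2*g+1)) (Fin (2*g+1)) ℝ :=
  fun i j => C ((g : ℤ) - ((i : ℕ) : ℤ) + ((j : ℕ) : ℤ))

/-- The `(2g+1) × (2g+1)` matrix `Jₙ^{(2g+1)}` with (1-based) `(i,j)` entry `1` if
`i + j = n + 1`, `0` otherwise. -/
def Jmat (g : ℕ) (n : ℕ) : Matrix (Fin (2*g+1)) (Fin (2*g+1)) ℝ :=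
  fun i j => if (i : ℕ) + (j : ℕ) + 1 = n then 1 else 0

/-- The `4g × 4g` matrix `e₀⁺` with (1-based) `(i,j)` entry `C (i - j - g)`. -/
noncomputable def e0p (g : ℕ) (C : ℤ → ℝ) : Matrix (Fin (4*g)) (Fin (4*g)) ℝ :=
  fun i j => C (((i : ℕ) : ℤ) - ((j : ℕ) : ℤ) - (g : ℤ))

/-- The `4g × 4g` matrix `e₀⁻` with (1-based) `(i,j)` entry `C (g - i + j)`. -/
noncomputable def e0m (g : ℕ) (C : ℤ → ℝ) : Matrix (Fin (4*g)) (Fin (4*g)) ℝ :=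
  fun i j => C ((g : ℤ) - ((i : ℕ) : ℤ) + ((j : ℕ) : ℤ))

/-- The `4g × 4g` matrix `Jₙ^{(4g)}` with (1-based) `(i,j)` entry `1` if `i + j = n + 1`,
`0` otherwise. -/
def J4 (g : ℕ) (n : ℕ) : Matrix (Fin (4*g)) (Fin (4*g)) ℝ :=
  fun i j => if (i : ℕ) + (j : ℕ) + 1 = n then 1 else 0

/-- The `8g × 8g` block-diagonal matrix `E₀⁺ = diag(e₀⁺, e₀⁺)`. -/
noncomputable def E0p (g : ℕ) (C : ℤ → ℝ) : Matrix (Fin (8*g)) (Fin (8*g)) ℝ :=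
  fun i j => if ((i : ℕ) < 4*g ↔ (j : ℕ) < 4*g) then
    C (((i : ℕ) : ℤ) - ((j : ℕ) : ℤ) - (g : ℤ)) else 0

/-- The `8g × 8g` block-diagonal matrix `E₀⁻ = diag(e₀⁻, e₀⁻)`. -/
noncomputable def E0m (g : ℕ) (C : ℤ → ℝ) : Matrix (Fin (8*g)) (Fin (8*g)) ℝ :=
  fun i j => if ((i : ℕ) < 4*g ↔ (j : ℕ) < 4*g) then
    C ((g : ℤ) - ((i : ℕ) : ℤ) + ((j : ℕ) : ℤ)) else 0

/-- The `8g × 8g` matrix `Jₙ^{(8g)}` with (1-based) `(i,j)` entry `1` if `i + j = n + 1`,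
`0` otherwise. -/
def J8 (g : ℕ) (n : ℕ) : Matrix (Fin (8*g)) (Fin (8*g)) ℝ :=
  fun i j => if (i : ℕ) + (j : ℕ) + 1 = n then 1 else 0

section AntidiagCorner

variable {R : Type*} [CommRing R] {N k n : ℕ}

theorem det_eq_pow_mul_det_submatrix_castLE (hk : k ≤ N) (M : Matrix (Fin N) (Fin N) R) (c : R)
    (hzero : ∀ i j : Fin N, (i : ℕ) < j → k ≤ (j : ℕ) → M i j = 0)
    (hdiag : ∀ i : Fin N, k ≤ (i : ℕ) → M i i = c) :
    M.det = c ^ (N - k) * (M.submatrix (Fin.castLE hk) (Fin.castLE hk)).det := by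
  let e : Fin k ⊕ Fin (N - k) ≃ Fin N := finSumFinEquiv.trans (finCongr (by omega))
  have h₁₂ : (M.submatrix e e).toBlocks₁₂ = 0 := by
    ext i j
    exact hzero _ _ (by simp [e]; omega) (by simp [e])
  have h₂₂ : (M.submatrix e e).toBlocks₂₂.IsLowerTriangular := fun i j hij =>
    hzero _ _ (by simpa [e] using hij) (by simp [e])
  rw [← det_submatrix_equiv_self e M, ← fromBlocks_toBlocks (M.submatrix e e), h₁₂,
    det_fromBlocks_zero₁₂, mul_comm, det_of_isLowerTriangular _ h₂₂]
  congr 1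
  calc ∏ i, (M.submatrix e e).toBlocks₂₂ i i = ∏ _i : Fin (N - k), c :=
        Finset.prod_congr rfl fun i _ => hdiag _ (by simp [e])
    _ = c ^ (N - k) := by simp

/-- `Jₙ^{(N)}`, with `0`-based indices. -/
def antidiagCorner (R : Type*) [Zero R] [One R] (N n : ℕ) : Matrix (Fin N) (Fin N) R :=
  of fun i j => if (i : ℕ) + (j : ℕ) + 1 = n then 1 else 0

theorem mul_antidiagCorner_apply (hn : n ≤ N) (B : Matrix (Fin N) (Fin N) R) (i j : Fin N) :
    (B * antidiagCorner R N n) i j =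
      if h : (j : ℕ) + 1 ≤ n then B i ⟨n - 1 - j, by omega⟩ else 0 := by
  rw [mul_apply]
  split_ifs with h
  · rw [Finset.sum_eq_single_of_mem ⟨n - 1 - j, by omega⟩ (Finset.mem_univ _)]
    · simp [antidiagCorner, show n - 1 - (j : ℕ) + j + 1 = n by omega]
    · intro l _ hl
      have : (l : ℕ) + j + 1 ≠ n := fun he => hl (Fin.ext (by simp; omega))
      simp [antidiagCorner, this]
  · refine Finset.sum_eq_zero fun l _ => ?_
    simp [antidiagCorner, show (l : ℕ) + j + 1 ≠ n by omega]

theorem submatrix_castLE_mul_antidiagCorner (hn : n ≤ k) (hk : k ≤ N)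
    (B : Matrix (Fin N) (Fin N) R) :
    (B * antidiagCorner R N n).submatrix (Fin.castLE hk) (Fin.castLE hk) =
      B.submatrix (Fin.castLE hk) (Fin.castLE hk) * antidiagCorner R k n := by
  ext i j
  rw [submatrix_apply, mul_antidiagCorner_apply (hn.trans hk),
    mul_antidiagCorner_apply hn]
  rfl

theorem det_add_smul_mul_antidiagCorner (hn : n ≤ k) (hk : k ≤ N)
    (A B : Matrix (Fin N) (Fin N) R) (ε c : R) (hA : A.IsLowerTriangular)
    (hdiag : ∀ i, A i i = c) :
    (A + ε • (B * antidiagCorner R N n)).det =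
      c ^ (N - k) * (A.submatrix (Fin.castLE hk) (Fin.castLE hk) +
        ε • (B.submatrix (Fin.castLE hk) (Fin.castLE hk) * antidiagCorner R k n)).det := by
  have hcol : ∀ i j : Fin N, k ≤ (j : ℕ) → (A + ε • (B * antidiagCorner R N n)) i j = A i j :=
    fun i j hj => by
      simp [mul_antidiagCorner_apply (hn.trans hk), show ¬((j : ℕ) + 1 ≤ n) by omega]
  rw [det_eq_pow_mul_det_submatrix_castLE hk _ c
    (fun i j hij hj => (hcol i j hj).trans (hA hij))
    (fun i hi => (hcol i i hi).trans (hdiag i)),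
    ← submatrix_castLE_mul_antidiagCorner hn hk]
  rfl

end AntidiagCorner

section BandedToeplitz

variable {g : ℕ} {C : ℤ → ℝ}

theorem e0p_isLowerTriangular (hsupp : ∀ m : ℤ, g < m.natAbs → C m = 0) :
    (e0p g C).IsLowerTriangular := fun _ _ h => hsupp _ (by simp at h; omega)

theorem E0p_isLowerTriangular (hsupp : ∀ m : ℤ, g < m.natAbs → C m = 0) :
    (E0p g C).IsLowerTriangular := fun _ _ h => by
  simp only [E0p, ite_eq_right_iff]
  exact fun _ => hsupp _ (by simp at h; omega)

theorem e0p_apply_self (i : Fin (4 * g)) : e0p g C i i = C (-g) := by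
  simp [e0p]

theorem E0p_apply_self (i : Fin (8 * g)) : E0p g C i i = C (-g) := by
  simp [E0p]

theorem E0p_submatrix_castLE (h : 4 * g ≤ 8 * g) :
    (E0p g C).submatrix (Fin.castLE h) (Fin.castLE h) = e0p g C := by
  ext i j
  simp [E0p, e0p]

theorem E0m_submatrix_castLE (h : 4 * g ≤ 8 * g) :
    (E0m g C).submatrix (Fin.castLE h) (Fin.castLE h) = e0m g C := by
  ext i j
  simp [E0m, e0m]

theorem e0p_submatrix_castLE (h : 2 * g + 1 ≤ 4 * g) :
    (e0p g C).submatrix (Fin.castLE h) (Fin.castLE h) = Ep g C :=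
  rfl

theorem e0m_submatrix_castLE (h : 2 * g + 1 ≤ 4 * g) :
    (e0m g C).submatrix (Fin.castLE h) (Fin.castLE h) = Em g C :=
  rfl

theorem J8_eq_antidiagCorner (n : ℕ) : J8 g n = antidiagCorner ℝ (8 * g) n := rfl

theorem J4_eq_antidiagCorner (n : ℕ) : J4 g n = antidiagCorner ℝ (4 * g) n := rfl

theorem Jmat_eq_antidiagCorner (n : ℕ) : Jmat g n = antidiagCorner ℝ (2 * g + 1) n := rfl

end BandedToeplitz

theorem stmt19_general (g : ℕ) (C : ℤ → ℝ)
    (hsupp : ∀ m : ℤ, g < m.natAbs → C m = 0) :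
    ∀ n : ℕ, 1 ≤ n → n ≤ 2*g → ∀ ε : ℝ, ε = 1 ∨ ε = -1 →
      (E0p g C + ε • (E0m g C * J8 g n)).det =
        C (-(g : ℤ)) ^ (4*g) * (e0p g C + ε • (e0m g C * J4 g n)).det ∧
      (E0p g C + ε • (E0m g C * J8 g n)).det =
        C (-(g : ℤ)) ^ (6*g - 1) * (Ep g C + ε • (Em g C * Jmat g n)).det := by
  intro n hn1 hn2 ε _
  have h8 : (E0p g C + ε • (E0m g C * J8 g n)).det =
      C (-g) ^ (4 * g) * (e0p g C + ε • (e0m g C * J4 g n)).det := by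
    rw [J8_eq_antidiagCorner, J4_eq_antidiagCorner,
      det_add_smul_mul_antidiagCorner (k := 4 * g) (by omega) (by omega) _ _ ε _
      (E0p_isLowerTriangular hsupp) E0p_apply_self, E0p_submatrix_castLE, E0m_submatrix_castLE,
      show 8 * g - 4 * g = 4 * g by omega]
  have h4 : (e0p g C + ε • (e0m g C * J4 g n)).det =
      C (-g) ^ (2 * g - 1) * (Ep g C + ε • (Em g C * Jmat g n)).det := by
    rw [J4_eq_antidiagCorner, Jmat_eq_antidiagCorner,
      det_add_smul_mul_antidiagCorner (k := 2 * g + 1) (by omega) (by omega) _ _ ε _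
      (e0p_isLowerTriangular hsupp) e0p_apply_self, e0p_submatrix_castLE, e0m_submatrix_castLE,
      show 4 * g - (2 * g + 1) = 2 * g - 1 by omega]
  refine ⟨h8, ?_⟩
  rw [h8, h4, ← mul_assoc, ← pow_add, show 4 * g + (2 * g - 1) = 6 * g - 1 by omega]

theorem stmt19 (g : ℕ) (hg : 1 ≤ g) (C : ℤ → ℝ)
    (hsupp : ∀ m : ℤ, g < m.natAbs → C m = 0) :
    ∀ n : ℕ, 1 ≤ n → n ≤ 2*g → ∀ ε : ℝ, ε = 1 ∨ ε = -1 →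
      (E0p g C + ε • (E0m g C * J8 g n)).det =
        C (-(g : ℤ)) ^ (4*g) * (e0p g C + ε • (e0m g C * J4 g n)).det ∧
      (E0p g C + ε • (E0m g C * J8 g n)).det =
        C (-(g : ℤ)) ^ (6*g - 1) * (Ep g C + ε • (Em g C * Jmat g n)).det :=
  stmt19_general g C hsupp
end
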